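/- arXiv:2008.09085 — 7 statements merged into one kernel-verified Lean document; each statement's English description precedes it below -/
import Mathlib

section
/- The right triangle with legs 1 and 2 (and hypotenuse √5) can be partitioned into 5 triangles, each congruent to the triangle scaled by a factor of 1/√5 (i.e., each similar to the original with ratio 1/√5 and of equal area 1/5 of the original). -/
/-!
The triangle with vertices `0`, `2`, `i` is cut by the altitude from `0`, the segment from `1`
to `(1 + 2i)/5`, the segment from `1` to `(6 + 2i)/5` and the segment from `(1 + 2i)/5` to
`(6 + 2i)/5` into five triangles, each with legs `1/√5` and `2/√5`. Each tile is the image of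
the scaled triangle under a glide reflection `z ↦ a z̄ + b` with `|a| = 1`. The lines
`2x = y`, `x + 2y = 1`, `2x - y = 2` and `y = 2/5` successively split off one tile from the
remaining ones, which gives both the covering and the disjointness of the interiors.
-/

open Complex
open scoped Pointwise

/-- The 1, 2, √5 right triangle with vertices `0`, `2`, `i` in the plane `ℂ`. -/
noncomputable def pinwheelTriangle : Set ℂ :=
  convexHull ℝ {(0 : ℂ), 2, I}

open scoped ComplexConjugate RealInnerProductSpace

attribute [local instance] Complex.finrank_real_complex_fact

local notation "ω" => Complex.orientation.areaForm

theorem convex_setOf_areaForm_nonneg (u p : ℂ) : Convex ℝ {z : ℂ | 0 ≤ ω u (z - p)} := by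
  simpa only [map_sub, sub_nonneg] using convex_halfSpace_ge (ω u).isLinear (ω u p)

theorem mem_convexHull_triple_iff {p q r z : ℂ} (hpqr : 0 < ω (q - p) (r - p)) :
    z ∈ convexHull ℝ {p, q, r} ↔
      0 ≤ ω (q - p) (z - p) ∧ 0 ≤ ω (r - q) (z - q) ∧ 0 ≤ ω (p - r) (z - r) := by
  have hcyc₁ : ω (r - q) (p - q) = ω (q - p) (r - p) := by
    simp only [Complex.areaForm, mul_im, conj_re, conj_im, sub_re, sub_im]; ring
  have hcyc₂ : ω (p - r) (q - r) = ω (q - p) (r - p) := by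
    simp only [Complex.areaForm, mul_im, conj_re, conj_im, sub_re, sub_im]; ring
  constructor
  · intro hz
    refine convexHull_min (t := {z | 0 ≤ ω (q - p) (z - p)} ∩ ({z | 0 ≤ ω (r - q) (z - q)} ∩
      {z | 0 ≤ ω (p - r) (z - r)})) ?_ ((convex_setOf_areaForm_nonneg _ _).inter
      ((convex_setOf_areaForm_nonneg _ _).inter (convex_setOf_areaForm_nonneg _ _))) hz
    simp only [Set.insert_subset_iff, Set.singleton_subset_iff, Set.mem_inter_iff,
      Set.mem_ofPred_eq, sub_self, map_zero, le_refl, true_and, and_true, hcyc₁, hcyc₂,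
      Orientation.areaForm_apply_self]
    exact ⟨hpqr.le, hpqr.le, hpqr.le⟩
  · rintro ⟨hc, ha, hb⟩
    -- the barycentric coordinates of `z` are the signed areas it spans with the three edges
    set d := ω (q - p) (r - p)
    set a := ω (r - q) (z - q)
    set b := ω (p - r) (z - r)
    set c := ω (q - p) (z - p)
    have hbary : (a : ℂ) * p + b * q + c * r = d * z := by
      apply Complex.ext <;>
        simp only [a, b, c, d, Complex.areaForm, add_re, add_im, mul_re, mul_im, ofReal_re,
          ofReal_im, conj_re, conj_im, sub_re, sub_im] <;> ring
    have hsum : a + b + c = d := by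
      simp only [a, b, c, d, Complex.areaForm, mul_im, conj_re, conj_im, sub_re, sub_im]; ring
    clear_value a b c d
    have hd : (d : ℂ) ≠ 0 := by exact_mod_cast hpqr.ne'
    have hmem := (convex_convexHull ℝ {p, q, r}).sum_mem (t := Finset.univ)
      (w := ![a / d, b / d, c / d]) (z := ![p, q, r])
      (by simp [Fin.forall_fin_succ, div_nonneg, ha, hb, hc, hpqr.le])
      (by simp only [Fin.sum_univ_three, Fin.isValue, Matrix.cons_val]; field_simp; linarith)
      (by intro i _; fin_cases i <;> exact subset_convexHull ℝ _ (by simp))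
    convert hmem using 1
    simp only [Fin.sum_univ_three, Fin.isValue, Matrix.cons_val, Complex.real_smul, ofReal_div]
    field_simp
    linear_combination hbary.symm

theorem disjoint_interior_of_subset_inner_le {E : Type*} [NormedAddCommGroup E]
    [InnerProductSpace ℝ E] {u : E} (hu : u ≠ 0) {c : ℝ} {s t : Set E}
    (hs : s ⊆ {x | ⟪u, x⟫ ≤ c}) (ht : t ⊆ {x | c ≤ ⟪u, x⟫}) :
    Disjoint (interior s) (interior t) := by
  refine Set.disjoint_left.2 fun x hxs hxt => ?_
  have hx : ⟪u, x⟫ = c := le_antisymm (hs (interior_subset hxs)) (ht (interior_subset hxt))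
  have hmove : Filter.Tendsto (fun ε : ℝ => x + ε • u) (nhdsWithin 0 (Set.Ioi 0)) (nhds x) := by
    have : Continuous (fun ε : ℝ => x + ε • u) := by fun_prop
    simpa using (this.tendsto 0).mono_left nhdsWithin_le_nhds
  obtain ⟨ε, hεs, hε⟩ :=
    ((hmove.eventually (isOpen_interior.mem_nhds hxs)).and self_mem_nhdsWithin).exists
  have hεu := hs (interior_subset hεs)
  simp only [Set.mem_ofPred_eq, inner_add_right, inner_smul_right, hx,
    real_inner_self_eq_norm_sq] at hεu
  have : 0 < ‖u‖ ^ 2 := by positivity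
  nlinarith

theorem disjoint_interior_convexHull_of_inner_le {E : Type*} [NormedAddCommGroup E]
    [InnerProductSpace ℝ E] {u : E} (hu : u ≠ 0) {c : ℝ} {s t : Set E}
    (hs : ∀ x ∈ s, ⟪u, x⟫ ≤ c) (ht : ∀ y ∈ t, c ≤ ⟪u, y⟫) :
    Disjoint (interior (convexHull ℝ s)) (interior (convexHull ℝ t)) :=
  disjoint_interior_of_subset_inner_le hu
    (convexHull_min hs (convex_halfSpace_le (innerₛₗ ℝ u).isLinear c))
    (convexHull_min ht (convex_halfSpace_ge (innerₛₗ ℝ u).isLinear c))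

noncomputable def conjAffineMap (a b : ℂ) : ℂ →ᵃ[ℝ] ℂ :=
  (LinearMap.mulLeft ℝ a ∘ₗ conjAe.toLinearMap).toAffineMap + AffineMap.const ℝ ℂ b

@[simp]
theorem conjAffineMap_apply (a b z : ℂ) : conjAffineMap a b z = a * conj z + b := rfl

theorem isometry_conjAffineMap {a : ℂ} (ha : ‖a‖ = 1) (b : ℂ) : Isometry (conjAffineMap a b) :=
  Isometry.of_dist_eq fun x y => by
    simp only [conjAffineMap_apply, Complex.dist_eq, add_sub_add_right_eq_sub, ← mul_sub,
      ← map_sub, norm_mul, ha, Complex.norm_conj, one_mul]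

theorem image_smul_conjAffineMap (a b : ℂ) (r : ℝ) (s : Set ℂ) :
    conjAffineMap a b '' (r • s) = conjAffineMap (a * r) b '' s := by
  rw [← Set.image_smul, Set.image_image]
  congr 1 with z
  simp only [conjAffineMap_apply, Complex.real_smul, map_mul, conj_ofReal]
  ring

theorem image_pinwheelTriangle_conjAffineMap (a b : ℂ) :
    conjAffineMap a b '' pinwheelTriangle = convexHull ℝ {b, b - I * a, b + 2 * a} := by
  rw [pinwheelTriangle, AffineMap.image_convexHull]
  simp only [Set.image_insert_eq, Set.image_singleton, conjAffineMap_apply, map_zero, mul_zero,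
    zero_add, conj_I, map_ofNat]
  rw [show a * 2 + b = b + 2 * a by ring, show a * -I + b = b - I * a by ring, Set.pair_comm]

theorem norm_sqrt_mul_eq_one {r : ℝ} {c : ℂ} (h : r * normSq c = 1) : ‖(√r : ℂ) * c‖ = 1 := by
  have hr : 0 ≤ r := by
    by_contra! hr
    nlinarith [normSq_nonneg c]
  rw [norm_mul, norm_real, Real.norm_of_nonneg (Real.sqrt_nonneg r), norm_def,
    ← Real.sqrt_mul hr, h, Real.sqrt_one]

theorem mem_pinwheelTriangle_iff {z : ℂ} :
    z ∈ pinwheelTriangle ↔ 0 ≤ z.re ∧ 0 ≤ z.im ∧ z.re + 2 * z.im ≤ 2 := by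
  rw [pinwheelTriangle, mem_convexHull_triple_iff (by simp)]
  simp only [Complex.areaForm, mul_im, conj_re, conj_im, sub_re, sub_im, I_re, I_im, re_ofNat,
    im_ofNat, zero_re, zero_im]
  constructor <;> rintro ⟨h₁, h₂, h₃⟩ <;> refine ⟨?_, ?_, ?_⟩ <;> linarith

/-- Each tile is listed counterclockwise, as `mem_convexHull_triple_iff` requires. -/
def pinwheelTile : Fin 5 → Set ℂ := ![
  convexHull ℝ {⟨2/5, 4/5⟩, I, 0},
  convexHull ℝ {⟨1/5, 2/5⟩, 0, 1},
  convexHull ℝ {⟨6/5, 2/5⟩, 1, 2},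
  convexHull ℝ {1, ⟨6/5, 2/5⟩, ⟨1/5, 2/5⟩},
  convexHull ℝ {⟨2/5, 4/5⟩, ⟨1/5, 2/5⟩, ⟨6/5, 2/5⟩}]

/-- The map `z ↦ √5 c z̄ + b` sends `(√5)⁻¹ • pinwheelTriangle` to the triangle with right-angle
vertex `b` and legs `-I c`, `2 c`; taking `|c| = 1/√5` keeps all vertices rational. -/
noncomputable def pinwheelMap (i : Fin 5) : ℂ → ℂ :=
  conjAffineMap (√5 * ![⟨-1/5, -2/5⟩, ⟨2/5, -1/5⟩, ⟨2/5, -1/5⟩, ⟨-2/5, 1/5⟩, ⟨2/5, -1/5⟩] i)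
    (![⟨2/5, 4/5⟩, ⟨1/5, 2/5⟩, ⟨6/5, 2/5⟩, 1, ⟨2/5, 4/5⟩] i)

theorem isometry_pinwheelMap (i : Fin 5) : Isometry (pinwheelMap i) :=
  isometry_conjAffineMap (norm_sqrt_mul_eq_one (by fin_cases i <;> norm_num [normSq_mk])) _

theorem image_pinwheelMap (i : Fin 5) :
    pinwheelMap i '' ((√5)⁻¹ • pinwheelTriangle) = pinwheelTile i := by
  have h5 : (√5 : ℂ) ≠ 0 := by exact_mod_cast (Real.sqrt_pos.2 (by norm_num : (0 : ℝ) < 5)).ne'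
  rw [pinwheelMap, image_smul_conjAffineMap, ofReal_inv, mul_right_comm, mul_inv_cancel₀ h5,
    one_mul, image_pinwheelTriangle_conjAffineMap]
  fin_cases i <;> simp only [pinwheelTile] <;> congr 4 <;> norm_num [Complex.ext_iff]

theorem pinwheelTile_subset (i : Fin 5) : pinwheelTile i ⊆ pinwheelTriangle := by
  fin_cases i <;>
    refine convexHull_min ?_ (convex_convexHull ℝ _) <;>
    norm_num [Set.insert_subset_iff, mem_pinwheelTriangle_iff]

theorem pairwise_disjoint_interior_pinwheelTile :
    Pairwise fun i j => Disjoint (interior (pinwheelTile i)) (interior (pinwheelTile j)) := by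
  refine (pairwise_disjoint_on fun i => interior (pinwheelTile i)).2 fun i j hij => ?_
  fin_cases i <;> fin_cases j <;> simp only [pinwheelTile] at hij ⊢ <;> try contradiction
  all_goals
    first
    | refine disjoint_interior_convexHull_of_inner_le (u := ⟨2, -1⟩) (c := 0)
        (by norm_num [Complex.ext_iff]) ?_ ?_ <;> norm_num [Complex.inner] <;> done
    | refine disjoint_interior_convexHull_of_inner_le (u := ⟨1, 2⟩) (c := 1)
        (by norm_num [Complex.ext_iff]) ?_ ?_ <;> norm_num [Complex.inner] <;> done
    | refine disjoint_interior_convexHull_of_inner_le (u := ⟨-2, 1⟩) (c := -2)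
        (by norm_num [Complex.ext_iff]) ?_ ?_ <;> norm_num [Complex.inner] <;> done
    | refine disjoint_interior_convexHull_of_inner_le (u := ⟨0, 1⟩) (c := 2/5)
        (by norm_num [Complex.ext_iff]) ?_ ?_ <;> norm_num [Complex.inner]

theorem iUnion_pinwheelTile : ⋃ i, pinwheelTile i = pinwheelTriangle := by
  refine (Set.iUnion_subset pinwheelTile_subset).antisymm fun z hz => Set.mem_iUnion.2 ?_
  obtain ⟨hre, him, hdiag⟩ := mem_pinwheelTriangle_iff.1 hz
  rcases le_or_gt (2 * z.re) z.im with h₀ | h₀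
  · refine ⟨0, (mem_convexHull_triple_iff (by norm_num)).2 ⟨?_, ?_, ?_⟩⟩ <;> norm_num <;> linarith
  rcases le_or_gt (z.re + 2 * z.im) 1 with h₁ | h₁
  · refine ⟨1, (mem_convexHull_triple_iff (by norm_num)).2 ⟨?_, ?_, ?_⟩⟩ <;> norm_num <;> linarith
  rcases le_or_gt 2 (2 * z.re - z.im) with h₂ | h₂
  · refine ⟨2, (mem_convexHull_triple_iff (by norm_num)).2 ⟨?_, ?_, ?_⟩⟩ <;> norm_num <;> linarith
  rcases le_or_gt z.im (2 / 5) with h₃ | h₃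
  · refine ⟨3, (mem_convexHull_triple_iff (by norm_num)).2 ⟨?_, ?_, ?_⟩⟩ <;> norm_num <;> linarith
  · refine ⟨4, (mem_convexHull_triple_iff (by norm_num)).2 ⟨?_, ?_, ?_⟩⟩ <;> norm_num <;> linarith

/-- The pinwheel substitution: the right triangle with legs `1` and `2` can be partitioned
into `5` triangles, each congruent (via a plane isometry) to the original triangle scaled
by `1/√5`; the pieces have pairwise disjoint interiors and their union is the triangle. -/
theorem pinwheel_partition :
    ∃ (f : Fin 5 → (ℂ → ℂ)),
      (∀ i, Isometry (f i)) ∧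
      (Set.univ : Set (Fin 5)).Pairwise (fun i j =>
        Disjoint (interior (f i '' ((Real.sqrt 5)⁻¹ • pinwheelTriangle)))
          (interior (f j '' ((Real.sqrt 5)⁻¹ • pinwheelTriangle)))) ∧
      (⋃ i, f i '' ((Real.sqrt 5)⁻¹ • pinwheelTriangle)) = pinwheelTriangle := by
  refine ⟨pinwheelMap, isometry_pinwheelMap, ?_, ?_⟩ <;> simp only [image_pinwheelMap]
  · exact fun i _ j _ hij => pairwise_disjoint_interior_pinwheelTile hij
  · exact iUnion_pinwheelTile
end

section
/- The Thue–Morse sequence t : ℕ → Fin 2, defined by t(n) = parity of the number of ones in the binary expansion of n, is not eventually periodic. -/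
/-- The Thue–Morse sequence: parity of the number of ones in the binary expansion. -/
def thueMorse (n : ℕ) : Fin 2 := Fin.ofNat 2 (Nat.digits 2 n).sum

/-!
Since `t (2n) = t n` and `t (2n+1) = t n + 1`, an eventual period `2q` of `t` halves to an
eventual period `q`, so it suffices to rule out an odd eventual period `2a+1`. Evaluating the
periodicity at `2m` and at `2m+1` gives `t (m + a) = t m + 1` and `t (m + a + 1) = t m + 1`;
comparing the second with the first at `m + 1` forces `t (m + 1) = t m`, so `t` is eventually
constant, which contradicts `t (m + a) = t m + 1`.
-/

theorem thueMorse_two_mul (n : ℕ) : thueMorse (2 * n) = thueMorse n := by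
  rcases Nat.eq_zero_or_pos n with rfl | hn
  · rfl
  · simp [thueMorse, Nat.digits_base_mul one_lt_two hn]

theorem thueMorse_two_mul_add_one (n : ℕ) : thueMorse (2 * n + 1) = thueMorse n + 1 := by
  rw [thueMorse, add_comm, Nat.digits_add 2 one_lt_two 1 n one_lt_two (Or.inl one_ne_zero),
    List.sum_cons, thueMorse, add_comm, Fin.ofNat_add]
  rfl

theorem thueMorse_add_of_add_two_mul {N q : ℕ}
    (h : ∀ n ≥ N, thueMorse (n + 2 * q) = thueMorse n) :
    ∀ n ≥ N, thueMorse (n + q) = thueMorse n := by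
  intro n hn
  simpa only [← mul_add, thueMorse_two_mul] using h (2 * n) (by omega)

theorem thueMorse_add_of_add_two_pow_mul {N q : ℕ} (k : ℕ)
    (h : ∀ n ≥ N, thueMorse (n + 2 ^ k * q) = thueMorse n) :
    ∀ n ≥ N, thueMorse (n + q) = thueMorse n := by
  induction k with
  | zero => simpa using h
  | succ k ih => exact ih (thueMorse_add_of_add_two_mul (by simpa [pow_succ', mul_assoc] using h))

theorem not_forall_thueMorse_add_two_mul_add_one (N a : ℕ) :
    ¬ ∀ n ≥ N, thueMorse (n + (2 * a + 1)) = thueMorse n := by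
  intro h
  have shift_a : ∀ m ≥ N, thueMorse (m + a) + 1 = thueMorse m := by
    intro m hm
    simpa only [show 2 * m + (2 * a + 1) = 2 * (m + a) + 1 by ring, thueMorse_two_mul_add_one,
      thueMorse_two_mul] using h (2 * m) (by omega)
  have shift_a_succ : ∀ m ≥ N, thueMorse (m + a + 1) = thueMorse m + 1 := by
    intro m hm
    simpa only [show 2 * m + 1 + (2 * a + 1) = 2 * (m + a + 1) by ring, thueMorse_two_mul,
      thueMorse_two_mul_add_one] using h (2 * m + 1) (by omega)
  have step : ∀ m ≥ N, thueMorse (m + 1) = thueMorse m := by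
    intro m hm
    rw [← shift_a (m + 1) (by omega), add_right_comm, shift_a_succ m hm]
    simp [add_assoc]
  have const : ∀ m ≥ N, thueMorse m = thueMorse N := by
    intro m hm
    induction m, hm using Nat.le_induction with
    | base => rfl
    | succ m hm ih => rw [step m hm, ih]
  have := shift_a N le_rfl
  rw [const (N + a) (by omega), add_eq_left] at this
  exact one_ne_zero this

/-- The Thue–Morse sequence is not eventually periodic. -/
theorem thueMorse_not_eventually_periodic :
    ¬ ∃ (N p : ℕ), 0 < p ∧ ∀ n ≥ N, thueMorse (n + p) = thueMorse n := by
  rintro ⟨N, p, hp, h⟩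
  obtain ⟨k, q, ⟨a, rfl⟩, rfl⟩ := Nat.exists_eq_two_pow_mul_odd hp.ne'
  exact not_forall_thueMorse_add_two_mul_add_one N a (thueMorse_add_of_add_two_pow_mul k h)
end

section
/- The subgroup of SO(3) generated by a rotation by 2π/3 about the z-axis and a rotation by 2π/4 about the x-axis is infinite. -/
open Matrix Real

namespace G34Aux

/-- Twice the product rotation matrix, as a matrix over `ℤ√3`. -/
def D : Matrix (Fin 3) (Fin 3) (ℤ√3) :=
  !![-1, 0, Zsqrtd.sqrtd; Zsqrtd.sqrtd, 0, 1; 0, 2, 0]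

def E₀ : Matrix (Fin 3) (Fin 3) (ℤ√3) :=
  !![1, Zsqrtd.sqrtd, -Zsqrtd.sqrtd; -Zsqrtd.sqrtd, 1, 1; Zsqrtd.sqrtd, -1, 1]

lemma D_sq : D * D = D + 2 • E₀ := by decide

lemma D_pow (n : ℕ) : ∃ E, D ^ (n + 1) = D + 2 • E := by
  induction n with
  | zero => exact ⟨0, by simp⟩
  | succ n ih =>
    obtain ⟨E, hE⟩ := ih
    refine ⟨E₀ + E * D, ?_⟩
    rw [pow_succ, hE, add_mul, D_sq, smul_mul_assoc, smul_add, add_assoc]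

noncomputable def φ : ℤ√3 →+* ℝ := Zsqrtd.toReal (by norm_num)

lemma φ_inj : Function.Injective φ :=
  Zsqrtd.toReal_injective _ (fun n h => by
    have h1 : (↑(n.natAbs * n.natAbs) : ℤ) = 3 := by rw [Int.natAbs_mul_self]; omega
    have h2 : n.natAbs * n.natAbs = 3 := by exact_mod_cast h1
    have h3 : n.natAbs ≤ 3 := Nat.le_of_dvd (by norm_num) ⟨n.natAbs, h2.symm⟩
    obtain ⟨m, hm⟩ : ∃ m, m = n.natAbs := ⟨_, rfl⟩
    rw [← hm] at h2 h3
    interval_cases m <;> omega)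

end G34Aux

open G34Aux in
/-- The subgroup `G(3,4)` of `SO(3)` generated by a rotation by `2π/3` about the z-axis
and a rotation by `2π/4` about the x-axis is infinite.  (The generators are given as
elements of the orthogonal group whose matrices are the explicit rotation matrices; both
have determinant `1`, so they lie in `SO(3)`.) -/
theorem G34_infinite (A B : Matrix.orthogonalGroup (Fin 3) ℝ)
    (hA : (A : Matrix (Fin 3) (Fin 3) ℝ) =
      !![cos (2*π/3), -sin (2*π/3), 0; sin (2*π/3), cos (2*π/3), 0; 0, 0, 1])
    (hB : (B : Matrix (Fin 3) (Fin 3) ℝ) =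
      !![1, 0, 0; 0, cos (2*π/4), -sin (2*π/4); 0, sin (2*π/4), cos (2*π/4)]) :
    (Subgroup.closure {A, B} : Set (Matrix.orthogonalGroup (Fin 3) ℝ)).Infinite := by
  have hc3 : cos (2*π/3) = -(1/2) := by
    rw [show (2*π/3 : ℝ) = π - π/3 by ring, Real.cos_pi_sub, Real.cos_pi_div_three]
  have hs3 : sin (2*π/3) = √3/2 := by
    rw [show (2*π/3 : ℝ) = π - π/3 by ring, Real.sin_pi_sub, Real.sin_pi_div_three]
  have hc4 : cos (2*π/4) = 0 := by
    rw [show (2*π/4 : ℝ) = π/2 by ring, Real.cos_pi_div_two]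
  have hs4 : sin (2*π/4) = 1 := by
    rw [show (2*π/4 : ℝ) = π/2 by ring, Real.sin_pi_div_two]
  -- the product matrix
  have hAB : ((A * B : Matrix.orthogonalGroup (Fin 3) ℝ) : Matrix (Fin 3) (Fin 3) ℝ)
      = (2:ℝ)⁻¹ • (D.map φ) := by
    have : ((A * B : Matrix.orthogonalGroup (Fin 3) ℝ) : Matrix (Fin 3) (Fin 3) ℝ)
        = (A : Matrix (Fin 3) (Fin 3) ℝ) * (B : Matrix (Fin 3) (Fin 3) ℝ) := rfl
    rw [this, hA, hB, hc3, hs3, hc4, hs4]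
    ext i j
    fin_cases i <;> fin_cases j <;>
      simp [D, φ, Matrix.mul_apply, Fin.sum_univ_three, Zsqrtd.toReal_apply,
        Matrix.vecHead, Matrix.vecTail] <;>
      norm_num <;> ring
  -- powers
  have hABpow : ∀ k : ℕ, (((A * B) ^ k : Matrix.orthogonalGroup (Fin 3) ℝ) :
      Matrix (Fin 3) (Fin 3) ℝ) = ((2:ℝ)⁻¹) ^ k • ((D ^ k).map φ) := by
    intro k
    have h1 : (((A * B) ^ k : Matrix.orthogonalGroup (Fin 3) ℝ) :
        Matrix (Fin 3) (Fin 3) ℝ)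
        = ((A * B : Matrix.orthogonalGroup (Fin 3) ℝ) : Matrix (Fin 3) (Fin 3) ℝ) ^ k := by
      induction k with
      | zero => rfl
      | succ n ih => rw [pow_succ, pow_succ, ← ih]; rfl
    have h2 : (D ^ k).map φ = (D.map ⇑φ) ^ k := by
      simpa [RingHom.mapMatrix_apply] using (map_pow φ.mapMatrix D k)
    rw [h1, hAB, smul_pow, h2]
  -- A*B has infinite order
  have hfin : ¬ IsOfFinOrder (A * B) := by
    intro hfo
    obtain ⟨k, hk, hk1⟩ := hfo.exists_pow_eq_one
    obtain ⟨n, rfl⟩ : ∃ n, k = n + 1 := ⟨k - 1, by omega⟩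
    obtain ⟨E, hE⟩ := D_pow n
    have h1 := hABpow (n + 1)
    rw [hk1] at h1
    -- look at entry (0,2)
    have h2 := congrArg (fun M : Matrix (Fin 3) (Fin 3) ℝ => M 0 2) h1
    simp only [hE, Matrix.smul_apply, Matrix.map_apply, Matrix.add_apply] at h2
    have hD02 : D 0 2 + 2 • E 0 2 = Zsqrtd.sqrtd + 2 * E 0 2 := by
      simp [D, nsmul_eq_mul]
    rw [hD02] at h2
    have h2' : (0:ℝ) = (2:ℝ)⁻¹ ^ (n + 1) • φ (Zsqrtd.sqrtd + 2 * E 0 2) := by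
      rw [← h2]
      exact (Matrix.one_apply_ne (by decide)).symm
    replace h2 := h2'
    have hpos : ((2:ℝ)⁻¹) ^ (n+1) ≠ 0 := by positivity
    have h3 : φ (Zsqrtd.sqrtd + 2 * E 0 2) = φ 0 := by
      have := (mul_eq_zero.mp h2.symm).resolve_left hpos
      simpa using this
    have h4 : (Zsqrtd.sqrtd + 2 * E 0 2 : ℤ√3) = 0 := φ_inj h3
    have h5 := congrArg Zsqrtd.im h4
    simp [Zsqrtd.im_mul, Zsqrtd.re_mul] at h5
    omega
  -- conclude
  have hinj : Function.Injective (fun n : ℕ => (A * B) ^ n) :=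
    injective_pow_iff_not_isOfFinOrder.mpr hfin
  refine Set.infinite_of_injective_forall_mem hinj ?_
  intro n
  have hAmem : A ∈ Subgroup.closure {A, B} :=
    Subgroup.subset_closure (Set.mem_insert _ _)
  have hBmem : B ∈ Subgroup.closure {A, B} :=
    Subgroup.subset_closure (Set.mem_insert_of_mem _ rfl)
  exact Subgroup.pow_mem _ (Subgroup.mul_mem _ hAmem hBmem) n
end

section
/- The subgroup of SO(3) generated by rotations by 2π/4 about the z-axis and by 2π/4 about the x-axis is finite (it is the rotation group of the cube, of order 24). -/
open Matrix Real

/-! The quarter turns about the z- and x-axes are integer matrices of order 4, so the subgroup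
they generate is the monoid they generate, and it is the image of the corresponding monoid of
integer matrices. That monoid is found by breadth-first search: the words of length at most 5
in the two generators are already closed under right multiplication by them, and give 24
distinct matrices. -/

open scoped Pointwise

namespace Finset

variable {M : Type*} [Monoid M] [DecidableEq M] (s : Finset M)

def wordBall : ℕ → Finset M
  | 0 => {1}
  | n + 1 => wordBall n ∪ wordBall n * s

lemma one_mem_wordBall : ∀ n, (1 : M) ∈ s.wordBall n
  | 0 => mem_singleton_self 1
  | n + 1 => mem_union_left _ (one_mem_wordBall n)

lemma coe_wordBall_subset_closure (n : ℕ) :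
    (s.wordBall n : Set M) ⊆ Submonoid.closure (s : Set M) := by
  induction n with
  | zero => simp [wordBall]
  | succ n ih =>
    intro x hx
    simp only [wordBall, coe_union, coe_mul, Set.mem_union] at hx
    obtain hx | ⟨y, hy, z, hz, rfl⟩ := hx
    · exact ih hx
    · exact mul_mem (ih hy) (Submonoid.subset_closure hz)

variable {s} in
lemma closure_subset_wordBall {n : ℕ} (h : s.wordBall n * s ⊆ s.wordBall n) :
    (Submonoid.closure (s : Set M) : Set M) ⊆ s.wordBall n := by
  intro x hx
  induction hx using Submonoid.closure_induction_right with
  | one => exact s.one_mem_wordBall n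
  | mul_right x _ y hy ih => exact h (mul_mem_mul ih hy)

variable {s} in
lemma coe_wordBall_eq_closure {n : ℕ} (h : s.wordBall n * s ⊆ s.wordBall n) :
    (s.wordBall n : Set M) = Submonoid.closure (s : Set M) :=
  (coe_wordBall_subset_closure s n).antisymm (closure_subset_wordBall h)

end Finset

lemma MonoidHom.image_closure_eq_mclosure {G M : Type*} [Group G] [Monoid M] (f : G →* M)
    {s : Set G} (hs : ∀ x ∈ s, IsOfFinOrder x) :
    f '' Subgroup.closure s = Submonoid.closure (f '' s) := by
  rw [← Subgroup.coe_toSubmonoid, Subgroup.closure_toSubmonoid_of_isOfFinOrder hs,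
    ← Submonoid.coe_map, MonoidHom.map_mclosure]

def quarterTurnZ : Matrix (Fin 3) (Fin 3) ℤ := !![0, -1, 0; 1, 0, 0; 0, 0, 1]

def quarterTurnX : Matrix (Fin 3) (Fin 3) ℤ := !![1, 0, 0; 0, 0, -1; 0, 1, 0]

lemma isOfFinOrder_quarterTurnZ : IsOfFinOrder quarterTurnZ :=
  isOfFinOrder_iff_pow_eq_one.mpr ⟨4, by norm_num, by decide⟩

lemma isOfFinOrder_quarterTurnX : IsOfFinOrder quarterTurnX :=
  isOfFinOrder_iff_pow_eq_one.mpr ⟨4, by norm_num, by decide⟩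

def cubeRotations : Finset (Matrix (Fin 3) (Fin 3) ℤ) :=
  Finset.wordBall {quarterTurnZ, quarterTurnX} 5

lemma cubeRotations_mul_subset :
    cubeRotations * {quarterTurnZ, quarterTurnX} ⊆ cubeRotations := by
  decide +kernel

lemma card_cubeRotations : cubeRotations.card = 24 := by
  decide +kernel

lemma coe_cubeRotations :
    (cubeRotations : Set (Matrix (Fin 3) (Fin 3) ℤ)) =
      Submonoid.closure {quarterTurnZ, quarterTurnX} := by
  rw [cubeRotations, Finset.coe_wordBall_eq_closure cubeRotations_mul_subset, Finset.coe_pair]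

lemma mapMatrix_quarterTurnZ :
    (Int.castRingHom ℝ).mapMatrix quarterTurnZ =
      !![cos (2*π/4), -sin (2*π/4), 0; sin (2*π/4), cos (2*π/4), 0; 0, 0, 1] := by
  rw [show 2*π/4 = π/2 by ring, cos_pi_div_two, sin_pi_div_two]
  ext i j
  fin_cases i <;> fin_cases j <;> simp [quarterTurnZ]

lemma mapMatrix_quarterTurnX :
    (Int.castRingHom ℝ).mapMatrix quarterTurnX =
      !![1, 0, 0; 0, cos (2*π/4), -sin (2*π/4); 0, sin (2*π/4), cos (2*π/4)] := by
  rw [show 2*π/4 = π/2 by ring, cos_pi_div_two, sin_pi_div_two]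
  ext i j
  fin_cases i <;> fin_cases j <;> simp [quarterTurnX]

/-- The subgroup `G(4,4)` of `SO(3)` generated by rotations by `2π/4` about the z-axis and
about the x-axis is finite: it is the rotation group of the cube, of order `24`. -/
theorem G44_finite (A B : Matrix.orthogonalGroup (Fin 3) ℝ)
    (hA : (A : Matrix (Fin 3) (Fin 3) ℝ) =
      !![cos (2*π/4), -sin (2*π/4), 0; sin (2*π/4), cos (2*π/4), 0; 0, 0, 1])
    (hB : (B : Matrix (Fin 3) (Fin 3) ℝ) =
      !![1, 0, 0; 0, cos (2*π/4), -sin (2*π/4); 0, sin (2*π/4), cos (2*π/4)]) :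
    (Subgroup.closure {A, B} : Set (Matrix.orthogonalGroup (Fin 3) ℝ)).Finite ∧
      Nat.card (Subgroup.closure {A, B} : Subgroup (Matrix.orthogonalGroup (Fin 3) ℝ)) = 24 := by
  set φ : Matrix (Fin 3) (Fin 3) ℤ →* Matrix (Fin 3) (Fin 3) ℝ :=
    (Int.castRingHom ℝ).mapMatrix.toMonoidHom
  have hφ : Function.Injective φ := Matrix.map_injective Int.cast_injective
  set ι := (Matrix.orthogonalGroup (Fin 3) ℝ).subtype
  have hA' : ι A = φ quarterTurnZ := hA.trans mapMatrix_quarterTurnZ.symm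
  have hB' : ι B = φ quarterTurnX := hB.trans mapMatrix_quarterTurnX.symm
  have hfin : ∀ g ∈ ({A, B} : Set _), IsOfFinOrder g := by
    rintro g (rfl | rfl) <;> rw [← Subtype.val_injective.isOfFinOrder_iff (f := ι)]
    · exact hA' ▸ φ.isOfFinOrder isOfFinOrder_quarterTurnZ
    · exact hB' ▸ φ.isOfFinOrder isOfFinOrder_quarterTurnX
  have himage : ι '' Subgroup.closure {A, B} = φ '' cubeRotations := by
    rw [ι.image_closure_eq_mclosure hfin, Set.image_pair, hA', hB', coe_cubeRotations,
      ← Set.image_pair φ, ← MonoidHom.map_mclosure, Submonoid.coe_map]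
  constructor
  · exact (himage ▸ cubeRotations.finite_toSet.image φ).of_finite_image
      Subtype.val_injective.injOn
  · calc Nat.card (Subgroup.closure {A, B})
        = Nat.card (ι '' Subgroup.closure {A, B}) :=
          (Nat.card_image_of_injective Subtype.val_injective _).symm
      _ = Nat.card (cubeRotations : Set (Matrix (Fin 3) (Fin 3) ℤ)) := by
          rw [himage, Nat.card_image_of_injective hφ]
      _ = 24 := by
          rw [Nat.card_coe_set_eq, Set.ncard_coe_finset, card_cubeRotations]
end

section
/- The subgroup of SO(3) generated by a rotation of order 2 about the z-axis and a rotation of order n about the x-axis is finite, for every n ≥ 1. -/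
open Matrix Real

/-!
`A` is the half-turn about the z-axis and `B` the rotation about the x-axis by the angle
`2π q` with `q = 1/n` rational, so both have finite order. Conjugating by a half-turn about an
orthogonal axis reverses a rotation, `A B A⁻¹ = B⁻¹`, hence `A` normalizes the cyclic group
`⟨B⟩` and the group generated by `A` and `B` is the product `⟨A⟩⟨B⟩` of two finite sets.
-/

namespace Subgroup

variable {G : Type*} [Group G]

theorem mem_normalizer_zpowers_of_conj_mem {a b : G} (hb : IsOfFinOrder b)
    (hab : a * b * a⁻¹ ∈ zpowers b) : a ∈ normalizer (zpowers b : Set G) := by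
  have : Finite (zpowers b : Set G) := hb.finite_zpowers.to_subtype
  refine mem_normalizer_fintype fun _ ⟨k, hk⟩ ↦ ?_
  rw [← hk, SetLike.mem_coe, ← conj_zpow]
  exact zpow_mem hab k

theorem finite_closure_pair_of_conj_mem_zpowers {a b : G} (ha : IsOfFinOrder a)
    (hb : IsOfFinOrder b) (hab : a * b * a⁻¹ ∈ zpowers b) :
    (closure {a, b} : Set G).Finite := by
  have hle : zpowers a ≤ normalizer (zpowers b : Set G) :=
    zpowers_le.2 (mem_normalizer_zpowers_of_conj_mem hb hab)
  rw [Set.insert_eq, closure_union, ← zpowers_eq_closure, ← zpowers_eq_closure,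
    coe_mul_of_left_le_normalizer_right _ _ hle]
  exact ha.finite_zpowers.mul hb.finite_zpowers

end Subgroup

noncomputable def rotX (θ : ℝ) : Matrix (Fin 3) (Fin 3) ℝ :=
  !![1, 0, 0; 0, cos θ, -sin θ; 0, sin θ, cos θ]

def halfTurnZ : Matrix (Fin 3) (Fin 3) ℝ :=
  !![-1, 0, 0; 0, -1, 0; 0, 0, 1]

theorem rotX_zero : rotX 0 = 1 := by
  simp [rotX, one_fin_three]

theorem rotX_add (α β : ℝ) : rotX (α + β) = rotX α * rotX β := by
  ext i j
  fin_cases i <;> fin_cases j <;>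
    simp [rotX, mul_apply, Fin.sum_univ_three, cos_add, sin_add] <;> ring

theorem rotX_nat_mul (k : ℕ) (θ : ℝ) : rotX (k * θ) = rotX θ ^ k := by
  induction k with
  | zero => simp [rotX_zero]
  | succ k ih => rw [Nat.cast_succ, add_one_mul, rotX_add, ih, pow_succ]

theorem rotX_int_mul_two_pi (m : ℤ) : rotX (m * (2 * π)) = 1 := by
  simp [rotX, one_fin_three, cos_int_mul_two_pi, sin_periodic.int_mul_eq]

theorem rotX_two_pi_mul_rat_pow_den (q : ℚ) : rotX (2 * π * q) ^ q.den = 1 := by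
  have hnum : (q.den : ℝ) * q = q.num := by exact_mod_cast Rat.den_mul_eq_num q
  rw [← rotX_nat_mul, ← rotX_int_mul_two_pi q.num, ← hnum]
  congr 1
  ring

theorem halfTurnZ_mul_self : halfTurnZ * halfTurnZ = 1 := by
  simp [halfTurnZ, one_fin_three]

theorem halfTurnZ_mul_rotX_mul_halfTurnZ (θ : ℝ) :
    halfTurnZ * rotX θ * halfTurnZ = rotX (-θ) := by
  simp [halfTurnZ, rotX]

theorem G2n_finite_general (n : ℕ) (A B : Matrix.orthogonalGroup (Fin 3) ℝ)
    (hA : (A : Matrix (Fin 3) (Fin 3) ℝ) =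
      !![cos (2*π/2), -sin (2*π/2), 0; sin (2*π/2), cos (2*π/2), 0; 0, 0, 1])
    (hB : (B : Matrix (Fin 3) (Fin 3) ℝ) =
      !![1, 0, 0; 0, cos (2*π/n), -sin (2*π/n); 0, sin (2*π/n), cos (2*π/n)]) :
    (Subgroup.closure {A, B} : Set (Matrix.orthogonalGroup (Fin 3) ℝ)).Finite := by
  set q : ℚ := (n : ℚ)⁻¹
  replace hA : (A : Matrix (Fin 3) (Fin 3) ℝ) = halfTurnZ := by
    rw [hA]; norm_num [halfTurnZ]
  replace hB : (B : Matrix (Fin 3) (Fin 3) ℝ) = rotX (2 * π * q) := by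
    rw [hB, rotX]; push_cast [q]; rfl
  have hA2 : A * A = 1 := Subtype.ext (by push_cast [hA]; exact halfTurnZ_mul_self)
  have hA_fin : IsOfFinOrder A := isOfFinOrder_iff_pow_eq_one.2 ⟨2, two_pos, by rw [sq, hA2]⟩
  have hB_fin : IsOfFinOrder B := by
    refine isOfFinOrder_iff_pow_eq_one.2 ⟨q.den, q.den_pos, Subtype.ext ?_⟩
    push_cast [hB]
    exact rotX_two_pi_mul_rat_pow_den q
  have hAB : A * B * A⁻¹ = B⁻¹ := by
    rw [inv_eq_of_mul_eq_one_right hA2]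
    refine eq_inv_of_mul_eq_one_left (Subtype.ext ?_)
    push_cast [hA, hB]
    rw [halfTurnZ_mul_rotX_mul_halfTurnZ, ← rotX_add, neg_add_cancel, rotX_zero]
  exact Subgroup.finite_closure_pair_of_conj_mem_zpowers hA_fin hB_fin
    (hAB ▸ inv_mem (Subgroup.mem_zpowers B))

/-- The subgroup `G(2,n)` of `SO(3)` generated by a rotation of order `2` (angle `2π/2`)
about the z-axis and a rotation of order `n` (angle `2π/n`) about the x-axis is finite,
for every `n ≥ 1`. -/
theorem G2n_finite (n : ℕ) (hn : 1 ≤ n) (A B : Matrix.orthogonalGroup (Fin 3) ℝ)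
    (hA : (A : Matrix (Fin 3) (Fin 3) ℝ) =
      !![cos (2*π/2), -sin (2*π/2), 0; sin (2*π/2), cos (2*π/2), 0; 0, 0, 1])
    (hB : (B : Matrix (Fin 3) (Fin 3) ℝ) =
      !![1, 0, 0; 0, cos (2*π/n), -sin (2*π/n); 0, sin (2*π/n), cos (2*π/n)]) :
    (Subgroup.closure {A, B} : Set (Matrix.orthogonalGroup (Fin 3) ℝ)).Finite :=
  G2n_finite_general n A B hA hB
end

section
/- The subgroup of SO(3) generated by a rotation of order 3 about the z-axis and a rotation of order 3 about the x-axis is infinite. -/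
open Matrix Real

private noncomputable def phi3 : ℤ√3 →+* ℝ := Zsqrtd.toReal (by norm_num)

private def psi2 : ℤ√3 →+* ZMod 2 := Zsqrtd.lift ⟨1, by decide⟩

private def Nmat : Matrix (Fin 3) (Fin 3) (ℤ√3) :=
  !![⟨-2,0⟩, ⟨0,1⟩, ⟨3,0⟩; ⟨0,2⟩, ⟨1,0⟩, ⟨0,1⟩; ⟨0,0⟩, ⟨0,2⟩, ⟨-2,0⟩]

private lemma mapMatrix_smul {R S : Type*} [CommRing R] [CommRing S] (f : R →+* S)
    (c : R) (X : Matrix (Fin 3) (Fin 3) R) :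
    f.mapMatrix (c • X) = f c • f.mapMatrix X := by
  ext i j
  simp [RingHom.mapMatrix_apply, Matrix.map_apply, Matrix.smul_apply]

private lemma phi3_inj : Function.Injective phi3 := by
  apply Zsqrtd.toReal_injective
  intro n h
  have h1 : n ≤ 1 := by nlinarith
  have h2 : -1 ≤ n := by nlinarith
  interval_cases n <;> omega

/-- The subgroup `G(3,3)` of `SO(3)` generated by a rotation of order `3` about the z-axis
and a rotation of order `3` about the x-axis is infinite. -/
theorem G33_infinite (A B : Matrix.orthogonalGroup (Fin 3) ℝ)
    (hA : (A : Matrix (Fin 3) (Fin 3) ℝ) =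
      !![cos (2*π/3), -sin (2*π/3), 0; sin (2*π/3), cos (2*π/3), 0; 0, 0, 1])
    (hB : (B : Matrix (Fin 3) (Fin 3) ℝ) =
      !![1, 0, 0; 0, cos (2*π/3), -sin (2*π/3); 0, sin (2*π/3), cos (2*π/3)]) :
    (Subgroup.closure {A, B} : Set (Matrix.orthogonalGroup (Fin 3) ℝ)).Infinite := by
  have hc : cos (2*π/3) = -(1/2) := by
    rw [show 2*π/3 = π - π/3 by ring, Real.cos_pi_sub, Real.cos_pi_div_three]
  have hs : sin (2*π/3) = Real.sqrt 3 / 2 := by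
    rw [show 2*π/3 = π - π/3 by ring, Real.sin_pi_sub, Real.sin_pi_div_three]
  have h33 : Real.sqrt 3 * Real.sqrt 3 = 3 := Real.mul_self_sqrt (by norm_num)
  set M : Matrix (Fin 3) (Fin 3) ℝ := (A : Matrix (Fin 3) (Fin 3) ℝ) * B with hMdef
  have hM : phi3.mapMatrix Nmat = (4:ℝ) • M := by
    rw [hMdef, hA, hB, hc, hs]
    ext i j
    fin_cases i <;> fin_cases j <;>
      simp [Nmat, phi3, RingHom.mapMatrix_apply, Matrix.map_apply, Matrix.mul_apply,
        Fin.sum_univ_three] <;>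
      nlinarith [h33]
  -- M has no nontrivial finite power equal to 1
  have hfin : ∀ n : ℕ, 0 < n → M ^ n ≠ 1 := by
    intro n hn hMn
    have hphi4 : phi3 (4:ℤ√3) = 4 := by simp [phi3]
    have h1 : phi3.mapMatrix (Nmat ^ n) = phi3.mapMatrix ((4:ℤ√3) ^ n • 1) := by
      rw [map_pow, hM, smul_pow, hMn, mapMatrix_smul, map_pow, hphi4, _root_.map_one]
    have h2 : Nmat ^ n = (4:ℤ√3) ^ n • 1 :=
      Matrix.map_injective phi3_inj (by simpa [RingHom.mapMatrix_apply] using h1)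
    -- push to ZMod 2
    have h3 : (psi2.mapMatrix Nmat) ^ n = psi2 ((4:ℤ√3) ^ n) • 1 := by
      rw [← map_pow, h2, mapMatrix_smul, map_pow, _root_.map_one]
    have h4 : psi2 ((4:ℤ√3) ^ n) = 0 := by
      rw [map_pow]
      have : psi2 (4:ℤ√3) = 0 := by decide
      rw [this, zero_pow hn.ne']
    set Q : Matrix (Fin 3) (Fin 3) (ZMod 2) := psi2.mapMatrix Nmat with hQdef
    have hQval : Q = !![0,1,1;0,1,1;0,0,0] := by
      rw [hQdef]
      ext i j
      fin_cases i <;> fin_cases j <;> rfl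
    have hQQ : Q * Q = Q := by rw [hQval]; decide
    have hQpow : ∀ m : ℕ, Q ^ (m+1) = Q := by
      intro m
      induction m with
      | zero => simp
      | succ k ih => rw [pow_succ, ih, hQQ]
    obtain ⟨m, rfl⟩ : ∃ m, n = m + 1 := ⟨n - 1, by omega⟩
    rw [h4, zero_smul, hQpow] at h3
    rw [hQval] at h3
    exact absurd h3 (by decide)
  have hg : ¬ IsOfFinOrder (A * B) := by
    rw [isOfFinOrder_iff_pow_eq_one]
    rintro ⟨n, hn, h1⟩
    apply hfin n hn
    have := congrArg (fun x : Matrix.orthogonalGroup (Fin 3) ℝ =>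
      (x : Matrix (Fin 3) (Fin 3) ℝ)) h1
    simpa [SubmonoidClass.coe_pow, hMdef] using this
  apply Set.infinite_of_injective_forall_mem
    (f := fun n : ℕ => (A * B) ^ n)
  · exact injective_pow_iff_not_isOfFinOrder.mpr hg
  · intro n
    have hAmem : A ∈ Subgroup.closure {A, B} :=
      Subgroup.subset_closure (by simp)
    have hBmem : B ∈ Subgroup.closure {A, B} :=
      Subgroup.subset_closure (by simp)
    exact pow_mem (mul_mem hAmem hBmem) n
end

section
/- The angle θ with cos θ = 1/3 (the dihedral-type angle arising between faces of the regular tetrahedron) is an irrational multiple of π; consequently the rotation by θ about an axis has infinite order in SO(3). -/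
open Matrix Real

private def dehnSeq : ℕ → ℤ
  | 0 => 1
  | 1 => 1
  | (n+2) => 2 * dehnSeq (n+1) - 9 * dehnSeq n

private lemma dehnSeq_cos {θ : ℝ} (h : Real.cos θ = 1/3) :
    ∀ n : ℕ, (dehnSeq n : ℝ) = 3 ^ n * Real.cos (n * θ) ∧
      (dehnSeq (n+1) : ℝ) = 3 ^ (n+1) * Real.cos ((n+1) * θ) := by
  intro n
  induction n with
  | zero => simp [dehnSeq, h]
  | succ n ih =>
    obtain ⟨h1, h2⟩ := ih
    constructor
    · exact_mod_cast h2
    have e1 : ((n : ℝ) + 1 + 1) * θ = (((n : ℝ) + 1) * θ) + θ := by ring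
    have e2 : (n : ℝ) * θ = (((n : ℝ) + 1) * θ) - θ := by ring
    have hc : Real.cos (((n : ℝ) + 1 + 1) * θ)
        = 2 * (1/3) * Real.cos (((n : ℝ) + 1) * θ) - Real.cos ((n : ℝ) * θ) := by
      rw [e1, Real.cos_add, e2, Real.cos_sub, h]
      ring
    have hd : dehnSeq (n+2) = 2 * dehnSeq (n+1) - 9 * dehnSeq n := rfl
    rw [hd]
    push_cast
    rw [hc]
    push_cast at h1 h2
    linear_combination 2 * h2 - 9 * h1

private lemma dehnSeq_not_dvd : ∀ n : ℕ, ¬ (3 : ℤ) ∣ dehnSeq (n+1) := by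
  intro n
  induction n with
  | zero => decide
  | succ n ih =>
    have : dehnSeq (n+2) = 2 * dehnSeq (n+1) - 9 * dehnSeq n := rfl
    rw [this]
    omega

private lemma arccos_third_not_rat_mul_pi : ∀ q : ℚ, Real.arccos (1/3) ≠ q * π := by
  intro q hq
  set θ := Real.arccos (1/3) with hθ
  have hcos : Real.cos θ = 1/3 := Real.cos_arccos (by norm_num) (by norm_num)
  set n : ℕ := 2 * q.den with hn
  have hden : (q.den : ℝ) ≠ 0 := by exact_mod_cast q.den_nz
  have hnum : ((q.den : ℝ)) * (q : ℝ) = (q.num : ℝ) := by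
    rw [Rat.cast_def]; field_simp
  have hnθ : (n : ℝ) * θ = (q.num : ℤ) * (2 * π) := by
    rw [hq]; push_cast [hn]
    linear_combination 2 * π * hnum
  have hcn : Real.cos ((n : ℝ) * θ) = 1 := by
    rw [hnθ]; exact Real.cos_int_mul_two_pi q.num
  have key := (dehnSeq_cos hcos n).1
  rw [hcn, mul_one] at key
  have hint : dehnSeq n = 3 ^ n := by exact_mod_cast key
  have hnpos : n ≠ 0 := by positivity
  obtain ⟨m, hm⟩ : ∃ m, n = m + 1 := ⟨n - 1, by omega⟩
  have hdvd : (3 : ℤ) ∣ dehnSeq (m+1) := by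
    rw [← hm, hint]
    exact dvd_pow_self 3 hnpos
  exact dehnSeq_not_dvd m hdvd

private noncomputable def rotMat (x : ℝ) : Matrix (Fin 3) (Fin 3) ℝ :=
  !![Real.cos x, -Real.sin x, 0; Real.sin x, Real.cos x, 0; 0, 0, 1]

private lemma rotMat_mul (x y : ℝ) : rotMat x * rotMat y = rotMat (x + y) := by
  simp only [rotMat, Matrix.mul_fin_three]
  rw [Real.cos_add, Real.sin_add]
  congr 1 <;> ring

/-- The angle `θ = arccos (1/3)` is an irrational multiple of `π`; consequently the
rotation by `θ` about an axis has infinite order in `SO(3)`. -/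
theorem arccos_third_irrational_multiple_of_pi
    (A : Matrix.orthogonalGroup (Fin 3) ℝ)
    (hA : (A : Matrix (Fin 3) (Fin 3) ℝ) =
      !![cos (arccos (1/3)), -sin (arccos (1/3)), 0;
         sin (arccos (1/3)), cos (arccos (1/3)), 0; 0, 0, 1]) :
    (∀ q : ℚ, arccos (1/3) ≠ q * π) ∧ ¬ IsOfFinOrder A := by
  set θ := Real.arccos (1/3) with hθ
  refine ⟨arccos_third_not_rat_mul_pi, ?_⟩
  intro hfin
  have hpow : ∀ n : ℕ, ((A ^ n : Matrix.orthogonalGroup (Fin 3) ℝ) : Matrix (Fin 3) (Fin 3) ℝ)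
      = rotMat (n * θ) := by
    intro n
    induction n with
    | zero => simp [rotMat, Matrix.one_fin_three]
    | succ n ih =>
      have : ((A ^ (n+1) : Matrix.orthogonalGroup (Fin 3) ℝ) : Matrix (Fin 3) (Fin 3) ℝ)
          = ((A ^ n : Matrix.orthogonalGroup (Fin 3) ℝ) : Matrix (Fin 3) (Fin 3) ℝ)
            * (A : Matrix (Fin 3) (Fin 3) ℝ) := by
        push_cast [pow_succ]; rfl
      rw [this, ih, hA]
      have : (!![cos θ, -sin θ, 0; sin θ, cos θ, 0; 0, 0, 1] :
          Matrix (Fin 3) (Fin 3) ℝ) = rotMat θ := rfl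
      rw [this, rotMat_mul]
      push_cast; ring_nf
  set n : ℕ := orderOf A with hnn
  have hnpos : 0 < n := hfin.orderOf_pos
  have h1 : A ^ n = 1 := pow_orderOf_eq_one A
  have h2 : rotMat ((n : ℝ) * θ) = (1 : Matrix (Fin 3) (Fin 3) ℝ) := by
    rw [← hpow n, h1]; rfl
  have hcos1 : Real.cos ((n : ℝ) * θ) = 1 := by
    have := congrFun (congrFun h2 0) 0
    simpa [rotMat, Matrix.one_fin_three] using this
  obtain ⟨k, hk⟩ := (Real.cos_eq_one_iff _).1 hcos1
  have hne : (n : ℝ) ≠ 0 := by positivity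
  apply arccos_third_not_rat_mul_pi ((2 * k : ℚ) / (n : ℚ))
  have : ((((2 * k : ℚ) / (n : ℚ)) : ℚ) : ℝ) = 2 * (k : ℝ) / (n : ℝ) := by
    push_cast; ring
  rw [this]
  field_simp
  simp only [hθ] at hk
  linear_combination -hk
end
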